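/- Let X be a connected multigraph with 2 ≤ deg(x) ≤ M for all x, not a cycle, in which small cycles are dense with radius parameter R. Then there exists a constant L (depending only on M and R) such that for every oriented edge e there is a non-backtracking path of length at most L from e to ě. -/

import Mathlib

open scoped BigOperators
open Filter

/-- A multigraph given by its set of *oriented* edges. Each oriented edge `e`
has an initial vertex `tail e = e⁻`, a terminal vertex `head e = e⁺`, and a
reversal `bar e = ě` with `ě ≠ e` (loops are counted twice). Local finiteness
is built in. -/
structure Multigraph where
  V : Type
  E : Type
  tail : E → V
  head : E → V
  bar : E → E
  bar_bar : ∀ e, bar (bar e) = e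
  bar_ne : ∀ e, bar e ≠ e
  head_bar : ∀ e, head (bar e) = tail e
  locFin : ∀ x, {e | tail e = x}.Finite

namespace Multigraph
variable (G : Multigraph)

/-- The degree of a vertex: the number of oriented edges emanating from it. -/
noncomputable def deg (x : G.V) : ℕ := (G.locFin x).toFinset.card

/-- `e → f`: `f` may follow `e` in a non-backtracking walk. -/
def Step (e f : G.E) : Prop := G.tail f = G.head e ∧ f ≠ G.bar e

/-- `e ⇒ f`: there is a non-backtracking walk from `e` to `f`. -/
def Reach : G.E → G.E → Prop := Relation.ReflTransGen G.Step

/-- One-step transition probabilities of the edge non-backtracking random walk. -/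
noncomputable def q (e f : G.E) : ℝ :=
  open Classical in
  if G.Step e f then 1 / ((G.deg (G.head e) : ℝ) - 1) else 0

/-- `n`-step transition probabilities `q_E^(n)` of the edge NBRW. -/
noncomputable def qn (G : Multigraph) : ℕ → G.E → G.E → ℝ
  | 0, e, f => open Classical in if e = f then 1 else 0
  | n + 1, e, f => ∑' g : G.E, qn G n e g * G.q g f

/-- Vertex NBRW transition probabilities:
`q^(n)(x,y) = (1/deg x) ∑_{e⁺=x, f⁺=y} q_E^(n)(e,f)`. -/
noncomputable def qv (n : ℕ) (x y : G.V) : ℝ :=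
  (1 / (G.deg x : ℝ)) *
    ∑' (e : {e : G.E // G.head e = x}) (f : {f : G.E // G.head f = y}),
      G.qn n e.1 f.1

def Adj (x y : G.V) : Prop := ∃ e : G.E, G.tail e = x ∧ G.head e = y

def Connected : Prop := ∀ x y : G.V, Relation.ReflTransGen G.Adj x y

/-- There is a walk of length `n` from `x` to `y`. -/
def WalkLen (G : Multigraph) : ℕ → G.V → G.V → Prop
  | 0, x, y => x = y
  | n + 1, x, y => ∃ z, G.Adj x z ∧ WalkLen G n z y

/-- Graph distance. -/
noncomputable def dist (x y : G.V) : ℕ := sInf {n | G.WalkLen n x y}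

/-- A cycle: a nonempty list of distinct oriented edges, with distinct initial
vertices, such that consecutive edges (cyclically) form non-backtracking steps. -/
def IsCycle (l : List G.E) : Prop :=
  l ≠ [] ∧ l.Nodup ∧ (l.map G.tail).Nodup ∧ List.Chain' G.Step (l ++ l.take 1)

/-- Small cycles are dense: some radius `R` works for every ball. -/
def SmallCyclesDense : Prop :=
  ∃ R : ℕ, ∀ x : G.V, ∃ l : List G.E, G.IsCycle l ∧ ∀ e ∈ l, G.dist x (G.tail e) ≤ R

/-- `X` is a (finite) cycle graph. -/
def IsCycleGraph : Prop := (Set.univ : Set G.V).Finite ∧ ∀ x, G.deg x = 2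

def Bipartite : Prop := ∃ c : G.V → Bool, ∀ e : G.E, c (G.tail e) ≠ c (G.head e)

end Multigraph

/-! An edge `e` is reversed as soon as a non-backtracking walk `W` leads from it to an edge `g`
that ends on a short cycle `C` without running along `C` in either direction: `g`, then once
round `C`, then `ḡ`, then `W` backwards is a non-backtracking walk from `e` to `ē`.

To reach such a `g`, walk `R` steps forward from `e` and then along a shortest path to a cycle in
the ball of radius `R`; cancelling backtracks at the junction never eats `e` itself, so a short
cycle is reached from `e` in at most `2R` steps. A shortest such walk ends transversally, unless
`e` already ends on a short cycle, on which it may then be assumed to lie. As `X` is connected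
and not a cycle, some edge `h` leaves that cycle `C`; follow `C` and then `h`. Either `h` leads
transversally to a short cycle, or `h` runs along a short cycle `D`; then `C ⊄ D`, and where `C`
(followed backwards) leaves `D` it has an edge transverse to `D`. Cycles in a ball of radius `R`
have at most `∑_{k ≤ R} M^k` edges, which bounds all lengths in terms of `M` and `R`. -/

theorem List.isChain_append_take_one_iff {α : Type*} {r : α → α → Prop} {l : List α} :
    List.IsChain r (l ++ l.take 1) ↔ Cycle.Chain r (l : Cycle α) := by
  cases l with
  | nil => simp
  | cons a t => exact Iff.rfl

namespace Multigraph

variable {G : Multigraph}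

theorem bar_injective : Function.Injective G.bar :=
  Function.LeftInverse.injective G.bar_bar

theorem tail_bar (e : G.E) : G.tail (G.bar e) = G.head e := by
  rw [← G.head_bar, G.bar_bar]

theorem tail_comp_bar : G.tail ∘ G.bar = G.head :=
  funext tail_bar

theorem Step.bar {e f : G.E} (h : G.Step e f) : G.Step (G.bar f) (G.bar e) :=
  ⟨by rw [tail_bar, G.head_bar, h.1], fun hfe => h.2 (by rw [bar_injective hfe, G.bar_bar])⟩

theorem exists_step {e : G.E} (hdeg : 2 ≤ G.deg (G.head e)) : ∃ f, G.Step e f := by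
  obtain ⟨f, hf, hfe⟩ := Finset.exists_mem_ne hdeg (G.bar e)
  exact ⟨f, (G.locFin _).mem_toFinset.1 hf, hfe⟩

theorem finite_setOf_head_eq (v : G.V) : {e | G.head e = v}.Finite :=
  ((G.locFin v).image G.bar).subset fun e he => ⟨G.bar e, by simpa [tail_bar] using he, G.bar_bar e⟩

variable (G) in
inductive NBPath : ℕ → G.E → G.E → Prop
  | refl (e : G.E) : NBPath 0 e e
  | tail {n : ℕ} {e f g : G.E} : NBPath n e f → G.Step f g → NBPath (n + 1) e g

namespace NBPath

theorem eq_of_zero {e f : G.E} (h : G.NBPath 0 e f) : e = f := by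
  cases h; rfl

theorem head {n : ℕ} {e f g : G.E} (hef : G.Step e f) (h : G.NBPath n f g) :
    G.NBPath (n + 1) e g := by
  induction h with
  | refl => exact (refl e).tail hef
  | tail _ hstep ih => exact (ih hef).tail hstep

theorem trans {m n : ℕ} {e f g : G.E} (hef : G.NBPath m e f) (hfg : G.NBPath n f g) :
    G.NBPath (m + n) e g := by
  induction hfg with
  | refl => exact hef
  | tail _ hstep ih => exact (ih hef).tail hstep

theorem reverse {n : ℕ} {e f : G.E} (h : G.NBPath n e f) : G.NBPath n (G.bar f) (G.bar e) := by
  induction h with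
  | refl e => exact refl _
  | tail _ hstep ih => exact head hstep.bar ih

end NBPath

theorem exists_nbPath (hdeg : ∀ x, 2 ≤ G.deg x) (n : ℕ) (e : G.E) : ∃ f, G.NBPath n e f := by
  induction n with
  | zero => exact ⟨e, .refl e⟩
  | succ n ih =>
    obtain ⟨f, hf⟩ := ih
    obtain ⟨g, hfg⟩ := exists_step (hdeg (G.head f))
    exact ⟨g, hf.tail hfg⟩

theorem q_pos (hdeg : ∀ x, 2 ≤ G.deg x) {e f : G.E} (h : G.Step e f) : 0 < G.q e f := by
  have : (2 : ℝ) ≤ G.deg (G.head e) := by exact_mod_cast hdeg _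
  rw [q, if_pos h]
  exact div_pos one_pos (by linarith)

theorem q_nonneg (hdeg : ∀ x, 2 ≤ G.deg x) (e f : G.E) : 0 ≤ G.q e f := by
  by_cases h : G.Step e f
  · exact (q_pos hdeg h).le
  · simp [q, h]

theorem qn_nonneg (hdeg : ∀ x, 2 ≤ G.deg x) (n : ℕ) (e f : G.E) : 0 ≤ G.qn n e f := by
  induction n generalizing f with
  | zero => unfold qn; split_ifs <;> norm_num
  | succ n ih => exact tsum_nonneg fun g => mul_nonneg (ih g) (q_nonneg hdeg g f)

theorem NBPath.qn_pos (hdeg : ∀ x, 2 ≤ G.deg x) {n : ℕ} {e f : G.E} (h : G.NBPath n e f) :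
    0 < G.qn n e f := by
  classical
  induction h with
  | refl => simp [qn]
  | @tail n e f g _ hstep ih =>
    have hsupp : (Function.support fun f' => G.qn n e f' * G.q f' g) ⊆
        {f' | G.head f' = G.tail g} := fun f' hf' => by
      by_contra hne
      exact hf' (by simp [q, Step, Ne.symm hne])
    exact Summable.tsum_pos (summable_of_hasFiniteSupport ((finite_setOf_head_eq _).subset hsupp))
      (fun f' => mul_nonneg (qn_nonneg hdeg n e f') (q_nonneg hdeg f' g)) f
      (mul_pos ih (q_pos hdeg hstep))

theorem WalkLen.snoc {n : ℕ} {x y z : G.V} (h : G.WalkLen n x y) (hyz : G.Adj y z) :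
    G.WalkLen (n + 1) x z := by
  induction n generalizing x with
  | zero => exact ⟨z, h ▸ hyz, rfl⟩
  | succ n ih =>
    obtain ⟨w, hxw, hw⟩ := h
    exact ⟨w, hxw, ih hw⟩

theorem walkLen_dist (hconn : G.Connected) (x y : G.V) : G.WalkLen (G.dist x y) x y := by
  have hne : {n | G.WalkLen n x y}.Nonempty := by
    induction hconn x y with
    | refl => exact ⟨0, rfl⟩
    | tail _ hadj ih =>
      obtain ⟨n, hn⟩ := ih
      exact ⟨n + 1, WalkLen.snoc hn hadj⟩
  exact Nat.sInf_mem hne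

/-- Each backtrack at the junction cancels one step of the walk against one step of the
non-backtracking walk, and `k ≤ m` keeps the initial edge `a` from being cancelled. -/
theorem NBPath.exists_of_walkLen {m k : ℕ} {a w : G.E} {y : G.V} (hw : G.NBPath m a w)
    (hk : k ≤ m) (hwalk : G.WalkLen k (G.head w) y) :
    ∃ n ≤ m + k, ∃ g, G.NBPath n a g ∧ G.head g = y := by
  induction k generalizing m w with
  | zero => exact ⟨m, by omega, w, hw, hwalk⟩
  | succ k ih =>
    obtain ⟨_, ⟨e, he, rfl⟩, hwalk⟩ := hwalk
    by_cases hback : e = G.bar w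
    · subst hback
      cases hw with
      | refl => omega
      | tail hw' hstep =>
        obtain ⟨n, hn, g, hg, hgy⟩ := ih hw' (by omega) (by rwa [← hstep.1, ← G.head_bar])
        exact ⟨n, by omega, g, hg, hgy⟩
    · obtain ⟨n, hn, g, hg, hgy⟩ := ih (hw.tail ⟨he, hback⟩) (by omega) hwalk
      exact ⟨n, by omega, g, hg, hgy⟩

theorem exists_finset_walkLen {M : ℕ} (hdeg : ∀ x, G.deg x ≤ M) (k : ℕ) (x : G.V) :
    ∃ s : Finset G.V, (∀ y, G.WalkLen k x y → y ∈ s) ∧ s.card ≤ M ^ k := by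
  classical
  induction k generalizing x with
  | zero => exact ⟨{x}, fun y hy => by simp [show x = y from hy], by simp⟩
  | succ k ih =>
    choose s hs hcard using ih
    refine ⟨(G.locFin x).toFinset.biUnion fun e => s (G.head e), ?_, ?_⟩
    · rintro y ⟨_, ⟨e, he, rfl⟩, hy⟩
      exact Finset.mem_biUnion.2 ⟨e, (G.locFin x).mem_toFinset.2 he, hs _ y hy⟩
    · calc _ ≤ ∑ e ∈ (G.locFin x).toFinset, (s (G.head e)).card := Finset.card_biUnion_le
        _ ≤ G.deg x * M ^ k := Finset.sum_le_card_nsmul _ _ _ fun e _ => hcard _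
        _ ≤ M ^ (k + 1) := by rw [pow_succ']; exact Nat.mul_le_mul_right _ (hdeg x)

theorem exists_nbPath_of_isChain {c d : G.E} {t : List G.E} (h : List.IsChain G.Step (c :: t))
    (hd : d ∈ c :: t) : ∃ k ≤ t.length, G.NBPath k c d := by
  induction t generalizing c with
  | nil => exact ⟨0, le_rfl, List.mem_singleton.1 hd ▸ .refl c⟩
  | cons s t ih =>
    rcases List.mem_cons.1 hd with rfl | hd
    · exact ⟨0, by simp, .refl _⟩
    · obtain ⟨hcs, hs⟩ := List.isChain_cons_cons.1 h
      obtain ⟨k, hk, hp⟩ := ih hs hd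
      exact ⟨k + 1, by simpa using hk, NBPath.head hcs hp⟩

theorem mem_reverse_map_bar {l : List G.E} {x : G.E} :
    x ∈ (l.map G.bar).reverse ↔ G.bar x ∈ l := by
  simp only [List.mem_reverse, List.mem_map]
  exact ⟨fun ⟨y, hy, hyx⟩ => hyx ▸ (G.bar_bar y).symm ▸ hy, fun h => ⟨_, h, G.bar_bar x⟩⟩

variable (G) in
def Transverse (l : List G.E) (g : G.E) : Prop :=
  G.head g ∈ l.map G.tail ∧ g ∉ l ∧ G.bar g ∉ l

namespace IsCycle

variable {l : List G.E}

theorem cycleChain (hl : G.IsCycle l) : Cycle.Chain G.Step (l : Cycle G.E) :=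
  List.isChain_append_take_one_iff.1 hl.2.2.2

theorem eq_of_tail_eq (hl : G.IsCycle l) {x y : G.E} (hx : x ∈ l) (hy : y ∈ l)
    (h : G.tail x = G.tail y) : x = y :=
  List.inj_on_of_nodup_map hl.2.2.1 hx hy h

theorem exists_isChain (hl : G.IsCycle l) {c : G.E} (hc : c ∈ l) :
    ∃ t, (c :: t) ~r l ∧ List.IsChain G.Step (c :: (t ++ [c])) := by
  obtain ⟨s, t, rfl⟩ := List.append_of_mem hc
  have hrot : (c :: (t ++ s)) ~r (s ++ c :: t) := by
    simpa using (List.isRotated_append (l := s) (l' := c :: t)).symm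
  refine ⟨t ++ s, hrot, ?_⟩
  have := hl.cycleChain
  rwa [Cycle.coe_eq_coe.2 hrot.symm, Cycle.chain_coe_cons] at this

theorem exists_mem_step (hl : G.IsCycle l) {c : G.E} (hc : c ∈ l) : ∃ p ∈ l, G.Step p c := by
  obtain ⟨t, hrot, hchain⟩ := hl.exists_isChain hc
  rw [← List.cons_append] at hchain
  refine ⟨(c :: t).getLast (List.cons_ne_nil c t), hrot.mem_iff.1 (List.getLast_mem _), ?_⟩
  exact (List.isChain_append.1 hchain).2.2 _ (List.getLast?_eq_some_getLast _) c rfl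

theorem exists_nbPath (hl : G.IsCycle l) {c d : G.E} (hc : c ∈ l) (hd : d ∈ l) :
    ∃ k < l.length, G.NBPath k c d := by
  obtain ⟨t, hrot, hchain⟩ := hl.exists_isChain hc
  rw [← List.cons_append] at hchain
  obtain ⟨k, hk, hp⟩ := exists_nbPath_of_isChain (List.isChain_append.1 hchain).1
    (hrot.mem_iff.2 hd)
  exact ⟨k, by simpa [← hrot.perm.length_eq] using hk, hp⟩

theorem forall_of_step_imp (hl : G.IsCycle l) {P : G.E → Prop}
    (hP : ∀ x ∈ l, ∀ y ∈ l, G.Step x y → P y → P x) {c : G.E} (hc : c ∈ l) (hPc : P c) :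
    ∀ x ∈ l, P x := by
  obtain ⟨t, hrot, hchain⟩ := hl.exists_isChain hc
  have hmem : ∀ x, x ∈ c :: (t ++ [c]) ↔ x ∈ l := fun x => by
    rw [← hrot.mem_iff]; simp only [List.mem_cons, List.mem_append]; tauto
  intro x hx
  refine (List.IsChain.iff_mem.1 hchain).backwards_induction P _ ?_ (fun _ => by simpa using hPc)
    x ((hmem x).2 hx)
  rintro x y ⟨hx, hy, hxy⟩
  exact hP x ((hmem x).1 hx) y ((hmem y).1 hy) hxy

theorem map_head_isRotated (hl : G.IsCycle l) : l.map G.head ~r l.map G.tail := by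
  obtain ⟨c, hc⟩ := List.exists_mem_of_ne_nil l hl.1
  obtain ⟨t, hrot, hchain⟩ := hl.exists_isChain hc
  have hmap : (c :: t).map G.head = (t ++ [c]).map G.tail := by
    rw [← List.forall₂_eq_eq_eq, List.forall₂_map_left_iff, List.forall₂_map_right_iff]
    exact (List.isChain_cons_append_singleton_iff_forall₂.1 hchain).imp fun x y h => h.1.symm
  refine (hrot.map _).symm.trans ?_
  rw [hmap]
  exact ((List.isRotated_concat c t).map _).trans (hrot.map _)

theorem mem_map_head_iff (hl : G.IsCycle l) {v : G.V} : v ∈ l.map G.head ↔ v ∈ l.map G.tail :=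
  hl.map_head_isRotated.mem_iff

theorem reverse (hl : G.IsCycle l) : G.IsCycle (l.map G.bar).reverse := by
  refine ⟨by simpa using hl.1, List.nodup_reverse.2 (hl.2.1.map bar_injective), ?_, ?_⟩
  · rw [List.map_reverse, List.map_map, List.nodup_reverse, tail_comp_bar,
      hl.map_head_isRotated.nodup_iff]
    exact hl.2.2.1
  · show List.IsChain _ _
    rw [List.isChain_append_take_one_iff]
    obtain ⟨a, t, rfl⟩ := List.exists_cons_of_ne_nil hl.1
    have h := hl.cycleChain
    rw [Cycle.chain_coe_cons] at h
    have h' : List.IsChain G.Step ((List.map G.bar (a :: (t ++ [a]))).reverse) :=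
      List.isChain_reverse.2 ((List.isChain_map G.bar).2 (h.imp fun _ _ => Step.bar))
    simp only [List.map_cons, List.map_append, List.map_nil, List.reverse_cons,
      List.reverse_append, List.reverse_nil, List.nil_append, List.singleton_append] at h' ⊢
    rwa [← Cycle.coe_cons_eq_coe_append, Cycle.chain_coe_cons]

theorem mem_map_tail_reverse_iff (hl : G.IsCycle l) {v : G.V} :
    v ∈ (l.map G.bar).reverse.map G.tail ↔ v ∈ l.map G.tail := by
  rw [List.map_reverse, List.mem_reverse, List.map_map, tail_comp_bar, hl.mem_map_head_iff]

theorem transverse_reverse_iff (hl : G.IsCycle l) {g : G.E} :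
    G.Transverse (l.map G.bar).reverse g ↔ G.Transverse l g := by
  rw [Transverse, Transverse, hl.mem_map_tail_reverse_iff, mem_reverse_map_bar,
    mem_reverse_map_bar, G.bar_bar]
  tauto

theorem exists_nbPath_bar_of_transverse (hl : G.IsCycle l) {g : G.E} (hg : G.Transverse l g) :
    ∃ k ≤ l.length + 1, G.NBPath k g (G.bar g) := by
  obtain ⟨hhead, hgl, hbar⟩ := hg
  obtain ⟨c, hc, hct⟩ := List.mem_map.1 hhead
  obtain ⟨p, hp, hpc⟩ := hl.exists_mem_step hc
  obtain ⟨k, hk, hcp⟩ := hl.exists_nbPath hc hp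
  have hgc : G.Step g c := ⟨hct, fun h => hbar (h ▸ hc)⟩
  have hpg : G.Step p (G.bar g) :=
    ⟨by rw [tail_bar, ← hct, hpc.1], fun h => hgl (bar_injective h ▸ hp)⟩
  exact ⟨k + 2, by omega, (NBPath.head hgc hcp).tail hpg⟩

theorem deg_le_two (hl : G.IsCycle l) {v : G.V} (hv : v ∈ l.map G.tail)
    (hout : ∀ h, G.tail h = v → h ∈ l ∨ G.bar h ∈ l) : G.deg v ≤ 2 := by
  classical
  obtain ⟨c, hc, rfl⟩ := List.mem_map.1 hv
  obtain ⟨p, hp, hpc⟩ := hl.exists_mem_step hc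
  have hsub : (G.locFin (G.tail c)).toFinset ⊆ {c, G.bar p} := by
    intro h hh
    replace hh : G.tail h = G.tail c := (G.locFin _).mem_toFinset.1 hh
    rcases hout h hh with hhl | hhl
    · simp [hl.eq_of_tail_eq hhl hc hh]
    · have hpr : G.bar p ∈ (l.map G.bar).reverse := by rwa [mem_reverse_map_bar, G.bar_bar]
      simp [hl.reverse.eq_of_tail_eq (mem_reverse_map_bar.2 hhl) hpr (by rw [hh, tail_bar, hpc.1])]
  exact (Finset.card_le_card hsub).trans Finset.card_le_two

/-- Otherwise the vertices of `l` are closed under adjacency, hence are all the vertices, and all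
of them have degree `2`. -/
theorem exists_exit (hconn : G.Connected) (hdeg : ∀ x, 2 ≤ G.deg x) (hnc : ¬ G.IsCycleGraph)
    (hl : G.IsCycle l) : ∃ h, G.tail h ∈ l.map G.tail ∧ h ∉ l ∧ G.bar h ∉ l := by
  by_contra! hno
  have hout : ∀ h, G.tail h ∈ l.map G.tail → h ∈ l ∨ G.bar h ∈ l := fun h hh =>
    or_iff_not_imp_left.2 (hno h hh)
  have hclosed : ∀ h, G.tail h ∈ l.map G.tail → G.head h ∈ l.map G.tail := fun h hh => by
    rcases hout h hh with h' | h'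
    · exact hl.mem_map_head_iff.1 (List.mem_map_of_mem h')
    · simpa [tail_bar] using List.mem_map_of_mem (f := G.tail) h'
  obtain ⟨c, hc⟩ := List.exists_mem_of_ne_nil l hl.1
  have hall : ∀ v, v ∈ l.map G.tail := fun v => by
    induction hconn (G.tail c) v with
    | refl => exact List.mem_map_of_mem hc
    | tail _ hadj ih =>
      obtain ⟨h, hh, rfl⟩ := hadj
      exact hclosed h (hh ▸ ih)
  exact hnc ⟨(List.finite_toSet _).subset fun v _ => hall v,
    fun v => le_antisymm (hl.deg_le_two (hall v) fun h hh => hout h (hh ▸ hall v)) (hdeg v)⟩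

/-- Otherwise membership in `D` propagates backwards along `C` from the edge of `C` entering
`tail h`, so `C ⊆ D`, and `h` would be the edge of `C` leaving `tail h`. -/
theorem exists_transverse_of_mem {C D : List G.E} (hC : G.IsCycle C) (hD : G.IsCycle D)
    {h : G.E} (hhC : G.tail h ∈ C.map G.tail) (hC₁ : h ∉ C) (hC₂ : G.bar h ∉ C) (hhD : h ∈ D) :
    ∃ f ∈ C, G.Transverse D f := by
  by_contra! hno
  have hno' : ∀ f ∈ C, G.head f ∈ D.map G.tail → f ∈ D ∨ G.bar f ∈ D := by
    intro f hf hfD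
    by_contra! h'
    exact hno f hf ⟨hfD, h'.1, h'.2⟩
  obtain ⟨p, hpC, hp⟩ := List.mem_map.1 (hC.mem_map_head_iff.2 hhC)
  have hpD : p ∈ D := by
    refine (hno' p hpC (hp ▸ List.mem_map_of_mem hhD)).resolve_right fun hpD => hC₂ ?_
    rwa [hD.eq_of_tail_eq hhD hpD (by rw [tail_bar, hp]), G.bar_bar]
  have hCD : ∀ x ∈ C, x ∈ D := hC.forall_of_step_imp (fun x hx y _ hxy hyD =>
      (hno' x hx (hxy.1 ▸ List.mem_map_of_mem hyD)).resolve_right fun hxD =>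
        hxy.2 (hD.eq_of_tail_eq hyD hxD (by rw [tail_bar, hxy.1]))) hpC hpD
  obtain ⟨c, hcC, hc⟩ := List.mem_map.1 hhC
  exact hC₁ (hD.eq_of_tail_eq (hCD c hcC) hhD hc ▸ hcC)

theorem exists_transverse_of_not_transverse {C D : List G.E} (hC : G.IsCycle C)
    (hD : G.IsCycle D) {h : G.E} (hhC : G.tail h ∈ C.map G.tail) (hC₁ : h ∉ C)
    (hC₂ : G.bar h ∉ C) (hhD : G.head h ∈ D.map G.tail) (hh : ¬ G.Transverse D h) :
    ∃ f ∈ C, G.Transverse D f := by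
  by_cases hhD' : h ∈ D
  · exact hC.exists_transverse_of_mem hD hhC hC₁ hC₂ hhD'
  have hhD'' : h ∈ (D.map G.bar).reverse :=
    mem_reverse_map_bar.2 (by_contra fun hb => hh ⟨hhD, hhD', hb⟩)
  obtain ⟨f, hfC, hf⟩ := hC.exists_transverse_of_mem hD.reverse hhC hC₁ hC₂ hhD''
  exact ⟨f, hfC, hD.transverse_reverse_iff.1 hf⟩

theorem length_le {M R : ℕ} (hconn : G.Connected) (hdeg : ∀ x, G.deg x ≤ M) (hl : G.IsCycle l)
    {x : G.V} (hR : ∀ e ∈ l, G.dist x (G.tail e) ≤ R) :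
    l.length ≤ ∑ k ∈ Finset.range (R + 1), M ^ k := by
  classical
  choose s hs hcard using fun k => exists_finset_walkLen hdeg k x
  have hsub : (l.map G.tail).toFinset ⊆ (Finset.range (R + 1)).biUnion s := by
    intro v hv
    obtain ⟨e, he, rfl⟩ := List.mem_map.1 (List.mem_toFinset.1 hv)
    exact Finset.mem_biUnion.2 ⟨_, Finset.mem_range.2 (Nat.lt_succ_of_le (hR e he)),
      hs _ _ (walkLen_dist hconn _ _)⟩
  calc l.length = (l.map G.tail).toFinset.card := by
        rw [List.toFinset_card_of_nodup hl.2.2.1, List.length_map]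
    _ ≤ ((Finset.range (R + 1)).biUnion s).card := Finset.card_le_card hsub
    _ ≤ ∑ k ∈ Finset.range (R + 1), (s k).card := Finset.card_biUnion_le
    _ ≤ _ := Finset.sum_le_sum fun k _ => hcard k

end IsCycle

variable (G) in
def shortCycleVerts (B : ℕ) : Set G.V :=
  {v | ∃ l, G.IsCycle l ∧ l.length ≤ B ∧ v ∈ l.map G.tail}

theorem exists_nbPath_head_mem {B R : ℕ} (hconn : G.Connected) (hdeg : ∀ x, 2 ≤ G.deg x)
    (hnear : ∀ x, ∃ y ∈ G.shortCycleVerts B, G.dist x y ≤ R) (a : G.E) :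
    ∃ n ≤ 2 * R, ∃ g, G.NBPath n a g ∧ G.head g ∈ G.shortCycleVerts B := by
  obtain ⟨w, hw⟩ := exists_nbPath hdeg R a
  obtain ⟨y, hy, hdist⟩ := hnear (G.head w)
  obtain ⟨n, hn, g, hg, rfl⟩ := hw.exists_of_walkLen hdist (walkLen_dist hconn _ _)
  exact ⟨n, by omega, g, hg, hy⟩

/-- The last edge of a shortest walk from `a` to a short cycle enters the cycle from outside. -/
theorem head_mem_or_exists_transverse {B R : ℕ} (hconn : G.Connected) (hdeg : ∀ x, 2 ≤ G.deg x)
    (hnear : ∀ x, ∃ y ∈ G.shortCycleVerts B, G.dist x y ≤ R) (a : G.E) :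
    G.head a ∈ G.shortCycleVerts B ∨
      ∃ n ≤ 2 * R, ∃ g l, G.NBPath n a g ∧ G.IsCycle l ∧ l.length ≤ B ∧ G.Transverse l g := by
  classical
  have hex : ∃ n g, G.NBPath n a g ∧ G.head g ∈ G.shortCycleVerts B := by
    obtain ⟨n, -, h⟩ := exists_nbPath_head_mem hconn hdeg hnear a
    exact ⟨n, h⟩
  have hK : Nat.find hex ≤ 2 * R := by
    obtain ⟨n, hn, h⟩ := exists_nbPath_head_mem hconn hdeg hnear a
    exact (Nat.find_min' hex h).trans hn
  obtain ⟨g, hg, l, hl, hlB, hgl⟩ := Nat.find_spec hex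
  generalize hN : Nat.find hex = N at hg hK
  cases hg with
  | refl => exact Or.inl ⟨l, hl, hlB, hgl⟩
  | @tail m _ f _ hf hstep =>
    have hfS : G.head f ∉ G.shortCycleVerts B := fun hfS =>
      Nat.find_min hex (by omega : m < Nat.find hex) ⟨f, hf, hfS⟩
    refine Or.inr ⟨m + 1, hK, g, l, hf.tail hstep, hl, hlB, hgl, fun hg => ?_, fun hg => ?_⟩
    · exact hfS ⟨l, hl, hlB, hstep.1 ▸ List.mem_map_of_mem hg⟩
    · refine hfS ⟨l, hl, hlB, hl.mem_map_head_iff.1 ?_⟩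
      simpa [G.head_bar, hstep.1] using List.mem_map_of_mem (f := G.head) hg

theorem IsCycle.exists_nbPath_transverse {B R : ℕ} (hconn : G.Connected) (hdeg : ∀ x, 2 ≤ G.deg x)
    (hnear : ∀ x, ∃ y ∈ G.shortCycleVerts B, G.dist x y ≤ R)
    (hnc : ¬ G.IsCycleGraph) {C : List G.E} (hC : G.IsCycle C) (hCB : C.length ≤ B) {a : G.E}
    (haC : a ∈ C) :
    ∃ n ≤ 2 * R + B, ∃ g l, G.NBPath n a g ∧ G.IsCycle l ∧ l.length ≤ B ∧ G.Transverse l g := by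
  obtain ⟨h, hhC, hC₁, hC₂⟩ := hC.exists_exit hconn hdeg hnc
  obtain ⟨p, hpC, hp⟩ := List.mem_map.1 (hC.mem_map_head_iff.2 hhC)
  obtain ⟨k, hk, hap⟩ := hC.exists_nbPath haC hpC
  have hah : G.NBPath (k + 1) a h := hap.tail ⟨hp.symm, fun hh => hC₂ (by rwa [hh, G.bar_bar])⟩
  rcases head_mem_or_exists_transverse hconn hdeg hnear h with ⟨D, hD, hDB, hhD⟩ | ⟨n, hn, hrest⟩
  case inr =>
    obtain ⟨g, l, hhg, hl⟩ := hrest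
    exact ⟨k + 1 + n, by omega, g, l, hah.trans hhg, hl⟩
  by_cases hhtr : G.Transverse D h
  · exact ⟨k + 1, by omega, h, D, hah, hD, hDB, hhtr⟩
  obtain ⟨f, hfC, hf⟩ := hC.exists_transverse_of_not_transverse hD hhC hC₁ hC₂ hhD hhtr
  obtain ⟨k', hk', haf⟩ := hC.exists_nbPath haC hfC
  exact ⟨k', by omega, f, D, haf, hD, hDB, hf⟩

theorem exists_nbPath_transverse {B R : ℕ} (hconn : G.Connected) (hdeg : ∀ x, 2 ≤ G.deg x)
    (hnear : ∀ x, ∃ y ∈ G.shortCycleVerts B, G.dist x y ≤ R)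
    (hnc : ¬ G.IsCycleGraph) (a : G.E) :
    ∃ n ≤ 2 * R + B, ∃ g l, G.NBPath n a g ∧ G.IsCycle l ∧ l.length ≤ B ∧ G.Transverse l g := by
  rcases head_mem_or_exists_transverse hconn hdeg hnear a with ⟨C, hC, hCB, haC⟩ | ⟨n, hn, hrest⟩
  case inr => exact ⟨n, by omega, hrest⟩
  by_cases hatr : G.Transverse C a
  · exact ⟨0, by omega, a, C, .refl a, hC, hCB, hatr⟩
  by_cases ha : a ∈ C
  · exact hC.exists_nbPath_transverse hconn hdeg hnear hnc hCB ha
  · refine hC.reverse.exists_nbPath_transverse hconn hdeg hnear hnc (by simpa using hCB)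
      (mem_reverse_map_bar.2 ?_)
    exact by_contra fun hb => hatr ⟨haC, ha, hb⟩

theorem exists_nbPath_bar {B R : ℕ} (hconn : G.Connected) (hdeg : ∀ x, 2 ≤ G.deg x)
    (hnear : ∀ x, ∃ y ∈ G.shortCycleVerts B, G.dist x y ≤ R)
    (hnc : ¬ G.IsCycleGraph) (e : G.E) :
    ∃ n ≤ 4 * R + 3 * B + 1, G.NBPath n e (G.bar e) := by
  obtain ⟨n, hn, g, l, heg, hl, hlB, hg⟩ := exists_nbPath_transverse hconn hdeg hnear hnc e
  obtain ⟨k, hk, hgg⟩ := hl.exists_nbPath_bar_of_transverse hg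
  exact ⟨n + k + n, by omega, (heg.trans hgg).trans heg.reverse⟩

theorem exists_mem_shortCycleVerts_dist_le {M R : ℕ} (hconn : G.Connected)
    (hdeg : ∀ x, G.deg x ≤ M)
    (hdense : ∀ x : G.V, ∃ l : List G.E, G.IsCycle l ∧ ∀ e ∈ l, G.dist x (G.tail e) ≤ R)
    (x : G.V) :
    ∃ y ∈ G.shortCycleVerts (∑ k ∈ Finset.range (R + 1), M ^ k), G.dist x y ≤ R := by
  obtain ⟨l, hl, hR⟩ := hdense x
  obtain ⟨c, hc⟩ := List.exists_mem_of_ne_nil l hl.1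
  exact ⟨G.tail c, ⟨l, hl, hl.length_le hconn hdeg hR, List.mem_map_of_mem hc⟩, hR c hc⟩

end Multigraph

/-- If `2 ≤ deg ≤ M`, the graph is connected, not a cycle, and every
ball of radius `R` contains a cycle, then there is `L = L(M,R)` such that every
oriented edge reaches its reversal by a non-backtracking path of length `≤ L`. -/
theorem nbrw_uniform_reversal (M R : ℕ) :
    ∃ L : ℕ, ∀ G : Multigraph,
      G.Connected → (∀ x, 2 ≤ G.deg x ∧ G.deg x ≤ M) → ¬ G.IsCycleGraph →
      (∀ x : G.V, ∃ l : List G.E, G.IsCycle l ∧ ∀ e ∈ l, G.dist x (G.tail e) ≤ R) →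
      ∀ e : G.E, ∃ n : ℕ, 1 ≤ n ∧ n ≤ L ∧ 0 < G.qn n e (G.bar e) := by
  refine ⟨4 * R + 3 * ∑ k ∈ Finset.range (R + 1), M ^ k + 1, ?_⟩
  intro G hconn hdeg hnc hdense e
  have hdeg₂ : ∀ x, 2 ≤ G.deg x := fun x => (hdeg x).1
  have hnear := Multigraph.exists_mem_shortCycleVerts_dist_le hconn (fun x => (hdeg x).2) hdense
  obtain ⟨n, hn, hpath⟩ := Multigraph.exists_nbPath_bar hconn hdeg₂ hnear hnc e
  refine ⟨n, Nat.one_le_iff_ne_zero.2 ?_, hn, hpath.qn_pos hdeg₂⟩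
  rintro rfl
  exact G.bar_ne e hpath.eq_of_zero.symm
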